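/- arXiv:2509.00519 — 2 statements merged into one kernel-verified Lean document; each statement's English description precedes it below -/
import Mathlib

section
/- Let P be a lattice polytope in ℝ^s with vertices v_1,...,v_m ∈ ℕ^s, let w: ℝ^s → ℝ be a nonzero linear function with w(e_i) ∈ ℕ for all i, and let P_w = conv((v_1,0),...,(v_m,0),(v_1,w(v_1)),...,(v_m,w(v_m))) ⊂ ℝ^{s+1}. Then for all n ≥ 0, ∑_{a ∈ nP ∩ ℤ^s} w(a) = |nP_w ∩ ℤ^{s+1}| − |nP ∩ ℤ^s|. -/
open scoped BigOperators Pointwise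

lemma aux_mem_convexHull_range_iff {m : ℕ} {E : Type*} [AddCommGroup E] [Module ℝ E]
    (u : Fin m → E) (x : E) :
    x ∈ convexHull ℝ (Set.range u) ↔
      ∃ l : Fin m → ℝ, (∀ i, 0 ≤ l i) ∧ ∑ i, l i = 1 ∧ ∑ i, l i • u i = x := by
  constructor
  · intro hx
    rw [convexHull_range_eq_exists_affineCombination] at hx
    obtain ⟨t, wt, h0, h1, hx⟩ := hx
    refine ⟨fun i => if i ∈ t then wt i else 0, fun i => by dsimp only; split; exacts [h0 i ‹_›, le_rfl], ?_, ?_⟩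
    · rw [Finset.sum_ite_mem, Finset.univ_inter, h1]
    · rw [← hx, Finset.affineCombination_eq_linear_combination _ _ _ h1]
      rw [← Finset.sum_subset (Finset.subset_univ t)]
      · exact Finset.sum_congr rfl fun i hi => by simp [hi]
      · intro i _ hi; simp [hi]
  · rintro ⟨l, h0, h1, rfl⟩
    exact (convex_convexHull ℝ _).sum_mem (fun i _ => h0 i) h1
      (fun i _ => subset_convexHull ℝ _ ⟨i, rfl⟩)

lemma aux_smul_snoc {s : ℕ} (c : ℝ) (x : Fin s → ℝ) (t : ℝ) :
    c • (Fin.snoc x t : Fin (s+1) → ℝ) = Fin.snoc (c • x) (c * t) := by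
  funext j
  induction j using Fin.lastCases with
  | last => simp
  | cast j => simp

lemma aux_prism (s m : ℕ) (w : (Fin s → ℝ) →ₗ[ℝ] ℝ) (u : Fin m → Fin s → ℝ)
    (hu : ∀ i, 0 ≤ w (u i)) :
    convexHull ℝ ((Set.range fun i => (Fin.snoc (u i) (0 : ℝ) : Fin (s+1) → ℝ)) ∪
        (Set.range fun i => (Fin.snoc (u i) (w (u i)) : Fin (s+1) → ℝ))) =
      {y : Fin (s+1) → ℝ | Fin.init y ∈ convexHull ℝ (Set.range u) ∧
        0 ≤ y (Fin.last s) ∧ y (Fin.last s) ≤ w (Fin.init y)} := by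
  apply Set.Subset.antisymm
  · apply convexHull_min
    · rintro y (⟨i, rfl⟩ | ⟨i, rfl⟩) <;>
        refine ⟨by rw [Fin.init_snoc]; exact subset_convexHull ℝ _ ⟨i, rfl⟩, ?_, ?_⟩ <;>
        simp [Fin.init_snoc, hu i]
    · intro y hy z hz a b ha hb hab
      have hinit : Fin.init (a • y + b • z) = a • Fin.init y + b • Fin.init z := rfl
      refine ⟨?_, ?_, ?_⟩
      · rw [hinit]
        exact (convex_convexHull ℝ _) hy.1 hz.1 ha hb hab
      · have : (a • y + b • z) (Fin.last s) = a * y (Fin.last s) + b * z (Fin.last s) := rfl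
        rw [this]
        exact add_nonneg (mul_nonneg ha hy.2.1) (mul_nonneg hb hz.2.1)
      · have h1 : (a • y + b • z) (Fin.last s) = a * y (Fin.last s) + b * z (Fin.last s) := rfl
        rw [h1, hinit, map_add, map_smul, map_smul]
        exact add_le_add (mul_le_mul_of_nonneg_left hy.2.2 ha)
          (mul_le_mul_of_nonneg_left hz.2.2 hb)
  · rintro y ⟨hx, ht0, htw⟩
    obtain ⟨l, hl0, hl1, hlx⟩ := (aux_mem_convexHull_range_iff u (Fin.init y)).mp hx
    set x := Fin.init y with hxdef
    set t := y (Fin.last s) with htdef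
    have hwx : 0 ≤ w x := le_trans ht0 htw
    set θ : ℝ := if w x = 0 then 0 else t / w x with hθdef
    have hθ0 : 0 ≤ θ := by
      rw [hθdef]; split
      · exact le_rfl
      · exact div_nonneg ht0 hwx
    have hθ1 : θ ≤ 1 := by
      rw [hθdef]; split
      · exact zero_le_one
      · exact div_le_one_of_le₀ htw hwx
    have hθt : θ * w x = t := by
      rw [hθdef]; split
      · rename_i h
        rw [h] at htw
        simp [le_antisymm htw ht0]
      · field_simp
    have hwsum : ∑ i, l i * w (u i) = w x := by
      rw [← hlx, map_sum]
      exact Finset.sum_congr rfl fun i _ => (map_smul w (l i) (u i)).symm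
    have hy : y = ∑ i, l i • ((1 - θ) • (Fin.snoc (u i) (0:ℝ) : Fin (s+1) → ℝ) + θ • (Fin.snoc (u i) (w (u i)) : Fin (s+1) → ℝ)) := by
      funext j
      rw [Finset.sum_apply]
      induction j using Fin.lastCases with
      | last =>
        have : ∀ i : Fin m, (l i • ((1 - θ) • (Fin.snoc (u i) (0:ℝ) : Fin (s+1) → ℝ) +
            θ • (Fin.snoc (u i) (w (u i)) : Fin (s+1) → ℝ))) (Fin.last s) = l i * (θ * w (u i)) := by
          intro i; simp [Fin.snoc_last, mul_comm]
        rw [Finset.sum_congr rfl fun i _ => this i]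
        have : ∑ i, l i * (θ * w (u i)) = θ * ∑ i, l i * w (u i) := by
          rw [Finset.mul_sum]; exact Finset.sum_congr rfl fun i _ => by ring
        rw [this, hwsum, hθt]
      | cast j =>
        have : ∀ i : Fin m, (l i • ((1 - θ) • (Fin.snoc (u i) (0:ℝ) : Fin (s+1) → ℝ) +
            θ • (Fin.snoc (u i) (w (u i)) : Fin (s+1) → ℝ))) (Fin.castSucc j) = l i * u i j := by
          intro i
          simp only [Pi.smul_apply, Pi.add_apply, Fin.snoc_castSucc, smul_eq_mul]
          ring
        rw [Finset.sum_congr rfl fun i _ => this i]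
        have := congrFun hlx j
        rw [Finset.sum_apply] at this
        simp only [Pi.smul_apply, smul_eq_mul] at this
        exact this.symm
    rw [hy]
    refine (convex_convexHull ℝ _).sum_mem (fun i _ => hl0 i) hl1 (fun i _ => ?_)
    exact (convex_convexHull ℝ _)
      (subset_convexHull ℝ _ (Set.mem_union_left _ (Set.mem_range_self i)))
      (subset_convexHull ℝ _ (Set.mem_union_right _ (Set.mem_range_self i)))
      (by linarith) hθ0 (by ring)
/-- Let `P = conv(v₁,...,v_m)` be a lattice polytope with vertices in `ℕ^s`,
and let `w : ℝ^s → ℝ` be a nonzero linear function with `w(eᵢ) ∈ ℕ`.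
Let `P_w = conv((vᵢ,0), (vᵢ, w(vᵢ)))`. Then for all `n ≥ 0`,
`∑_{a ∈ nP ∩ ℤ^s} w(a) = |nP_w ∩ ℤ^{s+1}| − |nP ∩ ℤ^s|`. -/
theorem stmt_5 (s m : ℕ) (v : Fin m → Fin s → ℕ)
    (w : (Fin s → ℝ) →ₗ[ℝ] ℝ) (hw : w ≠ 0)
    (hwe : ∀ i : Fin s, ∃ k : ℕ, w (Pi.single i 1) = (k : ℝ)) (n : ℕ)
    (P : Set (Fin s → ℝ))
    (hP : P = convexHull ℝ (Set.range fun i : Fin m => fun j : Fin s => (v i j : ℝ)))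
    (Pw : Set (Fin (s + 1) → ℝ))
    (hPw : Pw = convexHull ℝ
      ((Set.range fun i : Fin m =>
          Fin.snoc (fun j : Fin s => (v i j : ℝ)) (0 : ℝ)) ∪
       (Set.range fun i : Fin m =>
          Fin.snoc (fun j : Fin s => (v i j : ℝ)) (w fun j => (v i j : ℝ))))) :
    ∑ᶠ a ∈ {a : Fin s → ℤ | (fun j => (a j : ℝ)) ∈ (n : ℝ) • P},
        w (fun j => (a j : ℝ)) =
      ({a : Fin (s + 1) → ℤ | (fun j => (a j : ℝ)) ∈ (n : ℝ) • Pw}.ncard : ℝ) -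
      ({a : Fin s → ℤ | (fun j => (a j : ℝ)) ∈ (n : ℝ) • P}.ncard : ℝ) := by
  classical
  choose k hk using hwe
  set A : Set (Fin s → ℤ) := {a | (fun j => (a j : ℝ)) ∈ (n : ℝ) • P} with hA_def
  set B : Set (Fin (s + 1) → ℤ) := {a | (fun j => (a j : ℝ)) ∈ (n : ℝ) • Pw} with hB_def
  set u : Fin m → Fin s → ℝ := fun i => (n : ℝ) • fun j => (v i j : ℝ) with hu_def
  have hu_apply : ∀ i j, u i j = (n : ℝ) * (v i j : ℝ) := fun i j => rfl
  have hwx : ∀ x : Fin s → ℝ, w x = ∑ j, x j * (k j : ℝ) := by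
    intro x
    rw [LinearMap.pi_apply_eq_sum_univ w x]
    refine Finset.sum_congr rfl fun j _ => ?_
    rw [smul_eq_mul]
    congr 1
    rw [← hk j]
    congr 1
    funext j'
    simp [Pi.single_apply, eq_comm]
  have hQ : (n : ℝ) • P = convexHull ℝ (Set.range u) := by
    rw [hP, ← convexHull_smul, Set.smul_set_range, hu_def]
  have huw : ∀ i, 0 ≤ w (u i) := by
    intro i
    rw [hwx]
    refine Finset.sum_nonneg fun j _ => mul_nonneg ?_ (by positivity)
    rw [hu_apply]; positivity
  have hQw : (n : ℝ) • Pw =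
      convexHull ℝ ((Set.range fun i => (Fin.snoc (u i) (0 : ℝ) : Fin (s+1) → ℝ)) ∪
        (Set.range fun i => (Fin.snoc (u i) (w (u i)) : Fin (s+1) → ℝ))) := by
    rw [hPw, ← convexHull_smul, Set.smul_set_union, Set.smul_set_range, Set.smul_set_range]
    congr 1
    congr 1
    · refine congrArg Set.range (funext fun i => ?_)
      rw [aux_smul_snoc, mul_zero, hu_def]
    · refine congrArg Set.range (funext fun i => ?_)
      rw [aux_smul_snoc]
      have : w (u i) = (n : ℝ) * w (fun j => (v i j : ℝ)) := by
        rw [hu_def]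
        exact map_smul w _ _
      rw [this, hu_def]
  have hmemA : ∀ a : Fin s → ℤ,
      a ∈ A ↔ (fun j => (a j : ℝ)) ∈ convexHull ℝ (Set.range u) := by
    intro a
    rw [hA_def, Set.mem_setOf_eq, hQ]
  have hApos : ∀ a ∈ A, ∀ j, (0 : ℤ) ≤ a j := by
    intro a ha j
    obtain ⟨l, hl0, hl1, hlx⟩ :=
      (aux_mem_convexHull_range_iff u _).mp ((hmemA a).mp ha)
    have h2 := congrFun hlx j
    rw [Finset.sum_apply] at h2
    have : (0 : ℝ) ≤ (a j : ℝ) := by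
      rw [← h2]
      refine Finset.sum_nonneg fun i _ => ?_
      have : (l i • u i) j = l i * u i j := rfl
      rw [this, hu_apply]
      exact mul_nonneg (hl0 i) (by positivity)
    exact_mod_cast this
  set C : ℕ := Finset.univ.sup fun i : Fin m => Finset.univ.sup fun j : Fin s => n * v i j
    with hC_def
  have hub : ∀ i j, u i j ≤ (C : ℝ) := by
    intro i j
    rw [hu_apply]
    have h1 : n * v i j ≤ C :=
      le_trans (Finset.le_sup (f := fun j => n * v i j) (Finset.mem_univ j))
        (Finset.le_sup (f := fun i => Finset.univ.sup fun j => n * v i j) (Finset.mem_univ i))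
    calc (n : ℝ) * (v i j : ℝ) = ((n * v i j : ℕ) : ℝ) := by push_cast; ring
    _ ≤ (C : ℝ) := by exact_mod_cast h1
  have hAub : ∀ a ∈ A, ∀ j, a j ≤ (C : ℤ) := by
    intro a ha j
    obtain ⟨l, hl0, hl1, hlx⟩ :=
      (aux_mem_convexHull_range_iff u _).mp ((hmemA a).mp ha)
    have h2 := congrFun hlx j
    rw [Finset.sum_apply] at h2
    have : (a j : ℝ) ≤ (C : ℝ) := by
      rw [← h2]
      calc ∑ i, (l i • u i) j ≤ ∑ i, l i * (C : ℝ) := by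
            refine Finset.sum_le_sum fun i _ => ?_
            have : (l i • u i) j = l i * u i j := rfl
            rw [this]
            exact mul_le_mul_of_nonneg_left (hub i j) (hl0 i)
        _ = (C : ℝ) := by rw [← Finset.sum_mul, hl1, one_mul]
    exact_mod_cast this
  have hAfin : A.Finite := by
    refine Set.Finite.subset (Set.finite_Icc (fun _ : Fin s => (0 : ℤ))
      (fun _ : Fin s => (C : ℤ))) ?_
    intro a ha
    rw [Set.mem_Icc]
    exact ⟨fun j => hApos a ha j, fun j => hAub a ha j⟩
  set N : (Fin s → ℤ) → ℤ := fun a => ∑ j, a j * (k j : ℤ) with hN_def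
  have hNval : ∀ a : Fin s → ℤ, ((N a : ℤ) : ℝ) = w (fun j => (a j : ℝ)) := by
    intro a
    rw [hwx, hN_def]
    push_cast
    rfl
  have hNnn : ∀ a ∈ A, 0 ≤ N a := by
    intro a ha
    rw [hN_def]
    exact Finset.sum_nonneg fun j _ => mul_nonneg (hApos a ha j) (by positivity)
  have hmemB : ∀ b : Fin (s + 1) → ℤ,
      b ∈ B ↔ Fin.init b ∈ A ∧ 0 ≤ b (Fin.last s) ∧ b (Fin.last s) ≤ N (Fin.init b) := by
    intro b
    have e : Fin.init (fun j => (b j : ℝ)) = fun j => ((Fin.init b) j : ℝ) := rfl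
    rw [hB_def, Set.mem_setOf_eq, hQw, aux_prism s m w u huw, Set.mem_setOf_eq, e,
      ← hmemA (Fin.init b), ← hNval (Fin.init b)]
    beta_reduce
    constructor
    · rintro ⟨h1, h2, h3⟩
      exact ⟨h1, by exact_mod_cast h2, by exact_mod_cast h3⟩
    · rintro ⟨h1, h2, h3⟩
      exact ⟨h1, by exact_mod_cast h2, by exact_mod_cast h3⟩
  set F : Finset (Fin (s + 1) → ℤ) := hAfin.toFinset.biUnion fun a =>
    (Finset.Icc (0 : ℤ) (N a)).image fun t => (Fin.snoc a t : Fin (s + 1) → ℤ) with hF_def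
  have hBF : B = ↑F := by
    ext b
    rw [hmemB b, Finset.mem_coe, hF_def, Finset.mem_biUnion]
    constructor
    · rintro ⟨h1, h2, h3⟩
      exact ⟨Fin.init b, hAfin.mem_toFinset.mpr h1,
        Finset.mem_image.mpr ⟨b (Fin.last s), Finset.mem_Icc.mpr ⟨h2, h3⟩,
          Fin.snoc_init_self b⟩⟩
    · rintro ⟨a, ha, hb⟩
      obtain ⟨t, ht, rfl⟩ := Finset.mem_image.mp hb
      rw [Fin.init_snoc, Fin.snoc_last]
      exact ⟨hAfin.mem_toFinset.mp ha, (Finset.mem_Icc.mp ht).1, (Finset.mem_Icc.mp ht).2⟩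
  have hsnoc_inj : ∀ a : Fin s → ℤ, Function.Injective
      (fun t => (Fin.snoc a t : Fin (s + 1) → ℤ)) := by
    intro a t1 t2 h
    have := congrFun h (Fin.last s)
    simpa using this
  have hdisj : ∀ a ∈ hAfin.toFinset, ∀ b ∈ hAfin.toFinset, a ≠ b →
      Disjoint ((Finset.Icc (0 : ℤ) (N a)).image fun t => (Fin.snoc a t : Fin (s + 1) → ℤ))
        ((Finset.Icc (0 : ℤ) (N b)).image fun t => (Fin.snoc b t : Fin (s + 1) → ℤ)) := by
    intro a _ b _ hab
    rw [Finset.disjoint_left]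
    rintro x hxa hxb
    obtain ⟨t1, _, rfl⟩ := Finset.mem_image.mp hxa
    obtain ⟨t2, _, h⟩ := Finset.mem_image.mp hxb
    apply hab
    have := congrArg Fin.init h
    rw [Fin.init_snoc, Fin.init_snoc] at this
    exact this.symm
  have hFcard : F.card = ∑ a ∈ hAfin.toFinset, (N a + 1).toNat := by
    rw [hF_def, Finset.card_biUnion hdisj]
    refine Finset.sum_congr rfl fun a _ => ?_
    rw [Finset.card_image_of_injective _ (hsnoc_inj a), Int.card_Icc, sub_zero]
  have hBcard : (B.ncard : ℝ) = ∑ a ∈ hAfin.toFinset, ((N a : ℝ) + 1) := by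
    rw [hBF, Set.ncard_coe_finset, hFcard, Nat.cast_sum]
    refine Finset.sum_congr rfl fun a ha => ?_
    have h0 : 0 ≤ N a + 1 := by linarith [hNnn a (hAfin.mem_toFinset.mp ha)]
    have := Int.toNat_of_nonneg h0
    have h2 : (((N a + 1).toNat : ℤ) : ℝ) = ((N a + 1 : ℤ) : ℝ) := by exact_mod_cast this
    push_cast at h2 ⊢
    linarith [h2]
  have hAcard : (A.ncard : ℝ) = ∑ a ∈ hAfin.toFinset, (1 : ℝ) := by
    rw [Set.ncard_eq_toFinset_card _ hAfin]
    simp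
  rw [finsum_mem_eq_finite_toFinset_sum _ hAfin, hBcard, hAcard, ← Finset.sum_sub_distrib]
  refine Finset.sum_congr rfl fun a _ => ?_
  rw [← hNval a]
  ring
end

section
/- Let P = conv(v_1,...,v_m) be a lattice polytope with vertices in ℕ^s, and let w(x) = Cx + b be an affine function with C·e_i ∈ ℕ for all i and b ∈ ℝ. Let Q_1 = conv((v_1,0),...,(v_m,0),(v_1,Cv_1),...,(v_m,Cv_m)). Then for all n ≥ 0, ∑_{a ∈ nP ∩ ℤ^s} w(a) = E_{Q_1}(n) + (b−1)·E_P(n), where E_{Q_1}(n) = |nQ_1 ∩ ℤ^{s+1}| and E_P(n) = |nP ∩ ℤ^s|. -/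
open scoped BigOperators Pointwise


/-- combining two snocs with same base -/
lemma aux_snoc_comb {s : ℕ} (x : Fin s → ℝ) (c d α β : ℝ) (h : α + β = 1) :
    α • (Fin.snoc x c : Fin (s+1) → ℝ) + β • (Fin.snoc x d : Fin (s+1) → ℝ) = (Fin.snoc x (α * c + β * d) : Fin (s+1) → ℝ) := by
  funext i
  refine Fin.lastCases ?_ (fun j => ?_) i
  · simp [Fin.snoc_last]
  · simp only [Pi.add_apply, Pi.smul_apply, Fin.snoc_castSucc, smul_eq_mul]
    rw [← add_mul, h, one_mul]

/-- `x ↦ snoc x (c x)` is a linear map, given linear `c`. -/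
noncomputable def snocL (s : ℕ) (c : (Fin s → ℝ) →ₗ[ℝ] ℝ) :
    (Fin s → ℝ) →ₗ[ℝ] (Fin (s+1) → ℝ) :=
  LinearMap.pi (fun i => Fin.lastCases c (fun j => LinearMap.proj j) i)

lemma snocL_apply {s : ℕ} (c : (Fin s → ℝ) →ₗ[ℝ] ℝ) (x : Fin s → ℝ) :
    snocL s c x = (Fin.snoc x (c x) : Fin (s+1) → ℝ) := by
  funext i
  refine Fin.lastCases ?_ (fun j => ?_) i
  · simp [snocL, LinearMap.pi_apply, Fin.snoc_last]
  · simp [snocL, LinearMap.pi_apply, Fin.snoc_castSucc]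

noncomputable def initL (s : ℕ) : (Fin (s+1) → ℝ) →ₗ[ℝ] (Fin s → ℝ) :=
  LinearMap.funLeft ℝ ℝ Fin.castSucc

lemma initL_apply {s : ℕ} (y : Fin (s+1) → ℝ) : initL s y = Fin.init y := rfl

lemma aux_C_nonneg {s : ℕ} (C : (Fin s → ℝ) →ₗ[ℝ] ℝ) (k : Fin s → ℕ)
    (hk : ∀ i, C (Pi.single i 1) = (k i : ℝ)) (x : Fin s → ℝ) (hx : ∀ j, 0 ≤ x j) :
    0 ≤ C x := by
  rw [LinearMap.pi_apply_eq_sum_univ]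
  apply Finset.sum_nonneg
  intro i _
  have : (fun j => if i = j then (1:ℝ) else 0) = Pi.single i 1 := by
    funext j; simp [Pi.single_apply, eq_comm]
  rw [this, hk i]
  exact mul_nonneg (hx i) (Nat.cast_nonneg _)

lemma aux_C_eval {s : ℕ} (C : (Fin s → ℝ) →ₗ[ℝ] ℝ) (k : Fin s → ℕ)
    (hk : ∀ i, C (Pi.single i 1) = (k i : ℝ)) (x : Fin s → ℝ) :
    C x = ∑ i, x i * (k i : ℝ) := by
  rw [LinearMap.pi_apply_eq_sum_univ]
  refine Finset.sum_congr rfl fun i _ => ?_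
  have : (fun j => if i = j then (1:ℝ) else 0) = Pi.single i 1 := by
    funext j; simp [Pi.single_apply, eq_comm]
  rw [this, hk i, smul_eq_mul]

lemma aux_hull_eq {s m : ℕ} (V : Fin m → Fin s → ℝ) (hV : ∀ i j, 0 ≤ V i j)
    (C : (Fin s → ℝ) →ₗ[ℝ] ℝ) (hCnn : ∀ x : Fin s → ℝ, (∀ j, 0 ≤ x j) → 0 ≤ C x) :
    convexHull ℝ ((Set.range fun i => (Fin.snoc (V i) 0 : Fin (s+1) → ℝ)) ∪
      (Set.range fun i => (Fin.snoc (V i) (C (V i)) : Fin (s+1) → ℝ))) =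
    {y : Fin (s+1) → ℝ | Fin.init y ∈ convexHull ℝ (Set.range V) ∧
      0 ≤ y (Fin.last s) ∧ y (Fin.last s) ≤ C (Fin.init y)} := by
  have hPconv : Convex ℝ (convexHull ℝ (Set.range V)) := convex_convexHull _ _
  apply le_antisymm
  · apply convexHull_min
    · rintro y (⟨i, rfl⟩ | ⟨i, rfl⟩)
      · refine ⟨?_, ?_, ?_⟩
        · simpa [Fin.init_snoc] using subset_convexHull ℝ (Set.range V) ⟨i, rfl⟩
        · simp
        · simpa [Fin.snoc_last, Fin.init_snoc] using hCnn (V i) (hV i)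
      · refine ⟨?_, ?_, ?_⟩
        · simpa [Fin.init_snoc] using subset_convexHull ℝ (Set.range V) ⟨i, rfl⟩
        · simpa using hCnn (V i) (hV i)
        · simp
    · intro y hy z hz a c ha hc hac
      have hinit : Fin.init (a • y + c • z) = a • Fin.init y + c • Fin.init z := rfl
      refine ⟨?_, ?_, ?_⟩
      · rw [hinit]; exact hPconv hy.1 hz.1 ha hc hac
      · exact add_nonneg (mul_nonneg ha hy.2.1) (mul_nonneg hc hz.2.1)
      · calc (a • y + c • z) (Fin.last s)
            = a • y (Fin.last s) + c • z (Fin.last s) := rfl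
          _ ≤ a • C (Fin.init y) + c • C (Fin.init z) :=
              add_le_add (mul_le_mul_of_nonneg_left hy.2.2 ha)
                (mul_le_mul_of_nonneg_left hz.2.2 hc)
          _ = C (Fin.init (a • y + c • z)) := by rw [hinit]; simp [map_add, map_smul]
  · rintro y ⟨hx, ht0, htC⟩
    set x := Fin.init y with hxdef
    set t := y (Fin.last s) with htdef
    have h0 : (Fin.snoc x 0 : Fin (s+1) → ℝ) ∈ convexHull ℝ
        ((Set.range fun i => (Fin.snoc (V i) 0 : Fin (s+1) → ℝ)) ∪
         (Set.range fun i => (Fin.snoc (V i) (C (V i)) : Fin (s+1) → ℝ))) := by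
      apply convexHull_mono Set.subset_union_left
      have := (snocL s 0).image_convexHull (Set.range V)
      have him : snocL s 0 '' Set.range V
          = Set.range fun i => (Fin.snoc (V i) 0 : Fin (s+1) → ℝ) := by
        rw [← Set.range_comp]
        refine congrArg _ (funext fun i => ?_)
        simp [Function.comp, snocL_apply]
      rw [← him, ← this]
      exact ⟨x, hx, by simp [snocL_apply]⟩
    have h1 : (Fin.snoc x (C x) : Fin (s+1) → ℝ) ∈ convexHull ℝ
        ((Set.range fun i => (Fin.snoc (V i) 0 : Fin (s+1) → ℝ)) ∪
         (Set.range fun i => (Fin.snoc (V i) (C (V i)) : Fin (s+1) → ℝ))) := by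
      apply convexHull_mono Set.subset_union_right
      have := (snocL s C).image_convexHull (Set.range V)
      have him : snocL s C '' Set.range V
          = Set.range fun i => (Fin.snoc (V i) (C (V i)) : Fin (s+1) → ℝ) := by
        rw [← Set.range_comp]
        refine congrArg _ (funext fun i => ?_)
        simp [Function.comp, snocL_apply]
      rw [← him, ← this]
      exact ⟨x, hx, by simp [snocL_apply]⟩
    have hy : y = (Fin.snoc x t : Fin (s+1) → ℝ) := (Fin.snoc_init_self y).symm
    by_cases hCx : C x = 0
    · have ht : t = 0 := le_antisymm (hCx ▸ htC) ht0
      rw [hy, ht]; exact h0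
    · have hCpos : 0 < C x := lt_of_le_of_ne (le_trans ht0 htC) (Ne.symm hCx)
      have hβ0 : 0 ≤ t / C x := div_nonneg ht0 hCpos.le
      have hβ1 : t / C x ≤ 1 := by
        rw [div_le_one hCpos]; exact htC
      have hcomb : (1 - t / C x) • (Fin.snoc x 0 : Fin (s+1) → ℝ)
          + (t / C x) • (Fin.snoc x (C x) : Fin (s+1) → ℝ)
          = (Fin.snoc x t : Fin (s+1) → ℝ) := by
        rw [aux_snoc_comb x 0 (C x) _ _ (by ring)]
        field_simp
        rw [mul_zero, zero_add, mul_div_assoc, div_self hCx, mul_one]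
      rw [hy, ← hcomb]
      exact (convex_convexHull ℝ _) h0 h1 (by linarith) hβ0 (by ring)

lemma aux_snoc_zero_zero {s : ℕ} : (Fin.snoc (0 : Fin s → ℝ) (0:ℝ) : Fin (s+1) → ℝ) = 0 := by
  funext i
  refine Fin.lastCases ?_ (fun j => ?_) i <;> simp

lemma aux_smul_mem {s : ℕ} (C : (Fin s → ℝ) →ₗ[ℝ] ℝ) (P : Set (Fin s → ℝ))
    (hPnn : ∀ x ∈ P, ∀ j, 0 ≤ x j)
    (hCnn : ∀ x : Fin s → ℝ, (∀ j, 0 ≤ x j) → 0 ≤ C x)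
    (n : ℕ) (y : Fin (s+1) → ℝ) :
    y ∈ (n : ℝ) • {z : Fin (s+1) → ℝ | Fin.init z ∈ P ∧ 0 ≤ z (Fin.last s) ∧
          z (Fin.last s) ≤ C (Fin.init z)} ↔
      (Fin.init y ∈ (n:ℝ) • P ∧ 0 ≤ y (Fin.last s) ∧ y (Fin.last s) ≤ C (Fin.init y)) := by
  rcases Nat.eq_zero_or_pos n with hn | hn
  · subst hn
    rcases Set.eq_empty_or_nonempty P with hPe | ⟨x0, hx0⟩
    · have hTe : {z : Fin (s+1) → ℝ | Fin.init z ∈ P ∧ 0 ≤ z (Fin.last s) ∧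
          z (Fin.last s) ≤ C (Fin.init z)} = ∅ := by
        ext z; simp [hPe]
      simp [hTe, hPe, Set.smul_set_empty]
    · have hTne : ({z : Fin (s+1) → ℝ | Fin.init z ∈ P ∧ 0 ≤ z (Fin.last s) ∧
          z (Fin.last s) ≤ C (Fin.init z)}).Nonempty := by
        refine ⟨Fin.snoc x0 0, ?_, ?_, ?_⟩
        · rw [Fin.init_snoc]; exact hx0
        · simp
        · simpa [Fin.init_snoc] using hCnn x0 (hPnn x0 hx0)
      rw [Nat.cast_zero, Set.zero_smul_set hTne, Set.zero_smul_set ⟨x0, hx0⟩]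
      simp only [Set.mem_zero]
      constructor
      · rintro rfl
        refine ⟨rfl, le_refl _, ?_⟩
        have : Fin.init (0 : Fin (s+1) → ℝ) = 0 := rfl
        simp [this, map_zero]
      · rintro ⟨h1, h2, h3⟩
        have hC0 : C (Fin.init y) = 0 := by rw [h1, map_zero]
        have hlast : y (Fin.last s) = 0 := le_antisymm (hC0 ▸ h3) h2
        rw [← Fin.snoc_init_self y, h1, hlast, aux_snoc_zero_zero]
  · have hc : (0:ℝ) < n := by exact_mod_cast hn
    rw [Set.mem_smul_set_iff_inv_smul_mem₀ (ne_of_gt hc),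
        Set.mem_smul_set_iff_inv_smul_mem₀ (ne_of_gt hc)]
    have h1 : Fin.init ((n:ℝ)⁻¹ • y) = (n:ℝ)⁻¹ • Fin.init y := rfl
    have h2 : ((n:ℝ)⁻¹ • y) (Fin.last s) = (n:ℝ)⁻¹ * y (Fin.last s) := rfl
    have hinv : (0:ℝ) < (n:ℝ)⁻¹ := inv_pos.mpr hc
    simp only [Set.mem_setOf_eq, h1, h2, map_smul, smul_eq_mul]
    exact and_congr Iff.rfl (and_congr (mul_nonneg_iff_of_pos_left hinv)
      (mul_le_mul_iff_right₀ hinv))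

/-- Let `P = conv(v₁,...,v_m)` be a lattice polytope with vertices in `ℕ^s`, and
`w(x) = Cx + b` an affine function with `C eᵢ ∈ ℕ` and `b ∈ ℝ`. With
`Q₁ = conv((vᵢ,0), (vᵢ, C vᵢ))`, for all `n ≥ 0`:
`∑_{a ∈ nP ∩ ℤ^s} w(a) = E_{Q₁}(n) + (b − 1) E_P(n)`. -/
theorem stmt_6 (s m : ℕ) (v : Fin m → Fin s → ℕ)
    (C : (Fin s → ℝ) →ₗ[ℝ] ℝ) (b : ℝ)
    (hC : ∀ i : Fin s, ∃ k : ℕ, C (Pi.single i 1) = (k : ℝ)) (n : ℕ)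
    (P : Set (Fin s → ℝ))
    (hP : P = convexHull ℝ (Set.range fun i : Fin m => fun j : Fin s => (v i j : ℝ)))
    (Q₁ : Set (Fin (s + 1) → ℝ))
    (hQ₁ : Q₁ = convexHull ℝ
      ((Set.range fun i : Fin m =>
          Fin.snoc (fun j : Fin s => (v i j : ℝ)) (0 : ℝ)) ∪
       (Set.range fun i : Fin m =>
          Fin.snoc (fun j : Fin s => (v i j : ℝ)) (C fun j => (v i j : ℝ))))) :
    ∑ᶠ a ∈ {a : Fin s → ℤ | (fun j => (a j : ℝ)) ∈ (n : ℝ) • P},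
        (C (fun j => (a j : ℝ)) + b) =
      ({a : Fin (s + 1) → ℤ | (fun j => (a j : ℝ)) ∈ (n : ℝ) • Q₁}.ncard : ℝ) +
      (b - 1) * ({a : Fin s → ℤ | (fun j => (a j : ℝ)) ∈ (n : ℝ) • P}.ncard : ℝ) := by
  classical
  set V : Fin m → Fin s → ℝ := fun i j => (v i j : ℝ) with hVdef
  have hV : ∀ i j, 0 ≤ V i j := fun i j => Nat.cast_nonneg _
  choose k hk using hC
  have hCnn : ∀ x : Fin s → ℝ, (∀ j, 0 ≤ x j) → 0 ≤ C x := aux_C_nonneg C k hk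
  -- P is in the nonnegative orthant
  have hPnn : ∀ x ∈ P, ∀ j, 0 ≤ x j := by
    have hsub : P ⊆ {x : Fin s → ℝ | ∀ j, 0 ≤ x j} := by
      rw [hP]
      apply convexHull_min
      · rintro _ ⟨i, rfl⟩ j; exact hV i j
      · intro x hx y hy a c ha hc hac j
        exact add_nonneg (mul_nonneg ha (hx j)) (mul_nonneg hc (hy j))
    exact fun x hx j => hsub hx j
  -- Q₁ is the region under the graph of C over P
  have hQT : Q₁ = {z : Fin (s+1) → ℝ | Fin.init z ∈ P ∧ 0 ≤ z (Fin.last s) ∧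
      z (Fin.last s) ≤ C (Fin.init z)} := by
    rw [hQ₁, aux_hull_eq V hV C hCnn, hP]
  set S : Set (Fin s → ℤ) := {a : Fin s → ℤ | (fun j => (a j : ℝ)) ∈ (n : ℝ) • P}
    with hSdef
  -- boundedness of P
  set B : ℕ := ∑ i, ∑ j, v i j with hBdef
  have hbound : ∀ x ∈ P, ∀ j, x j ≤ (B : ℝ) := by
    have hsub : P ⊆ {x : Fin s → ℝ | ∀ j, x j ≤ (B : ℝ)} := by
      rw [hP]
      apply convexHull_min
      · rintro _ ⟨i, rfl⟩ j
        have h1 : v i j ≤ B := by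
          calc v i j ≤ ∑ j', v i j' := Finset.single_le_sum (fun _ _ => Nat.zero_le _)
                (Finset.mem_univ j)
            _ ≤ B := Finset.single_le_sum (f := fun i' => ∑ j', v i' j')
                (fun _ _ => Nat.zero_le _) (Finset.mem_univ i)
        show ((v i j : ℕ) : ℝ) ≤ (B : ℝ)
        exact_mod_cast h1
      · intro x hx y hy a c ha hc hac j
        calc a * x j + c * y j ≤ a * B + c * B :=
              add_le_add (mul_le_mul_of_nonneg_left (hx j) ha)
                (mul_le_mul_of_nonneg_left (hy j) hc)
          _ = B := by rw [← add_mul, hac, one_mul]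
    exact fun x hx j => hsub hx j
  -- finiteness of S
  have hSsub : S ⊆ Set.Icc (0 : Fin s → ℤ) (fun _ => (n * B : ℤ)) := by
    rintro a ⟨z, hz, hza⟩
    have hz' : ∀ j, (a j : ℝ) = n * z j := fun j => (congrFun hza j).symm
    constructor
    · intro j
      have : (0:ℝ) ≤ (a j : ℝ) := by
        rw [hz' j]; exact mul_nonneg (Nat.cast_nonneg _) (hPnn z hz j)
      exact_mod_cast this
    · intro j
      have : (a j : ℝ) ≤ (n : ℝ) * B := by
        rw [hz' j]
        exact mul_le_mul_of_nonneg_left (hbound z hz j) (Nat.cast_nonneg _)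
      exact_mod_cast this
  have hSfin : S.Finite := (Set.finite_Icc _ _).subset hSsub
  set SF : Finset (Fin s → ℤ) := hSfin.toFinset with hSFdef
  have hScoe : S = ↑SF := hSfin.coe_toFinset.symm
  -- the weight is a nonnegative integer on lattice points of S
  set Na : (Fin s → ℤ) → ℤ := fun a => ∑ j, a j * (k j : ℤ) with hNadef
  have hNaC : ∀ a : Fin s → ℤ, ((Na a : ℝ)) = C (fun j => (a j : ℝ)) := by
    intro a
    simp only [hNadef]
    rw [aux_C_eval C k hk]
    push_cast
    ring
  have hSnn : ∀ a ∈ S, ∀ j, 0 ≤ a j := fun a ha j => (hSsub ha).1 j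
  have hNann : ∀ a ∈ S, 0 ≤ Na a := fun a ha =>
    Finset.sum_nonneg fun j _ => mul_nonneg (hSnn a ha j) (Int.natCast_nonneg _)
  -- key membership characterization for lattice points of n • Q₁
  have hkey : ∀ c : Fin (s+1) → ℤ,
      ((fun j => (c j : ℝ)) ∈ (n : ℝ) • Q₁) ↔
        (Fin.init c ∈ S ∧ c (Fin.last s) ∈ Finset.Icc 0 (Na (Fin.init c))) := by
    intro c
    rw [hQT, aux_smul_mem C P hPnn hCnn n]
    have hinit : Fin.init (fun j => (c j : ℝ)) = fun j => ((Fin.init c) j : ℝ) := rfl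
    rw [hinit, ← hNaC (Fin.init c)]
    constructor
    · rintro ⟨h1, h2, h3⟩
      exact ⟨h1, Finset.mem_Icc.mpr ⟨by exact_mod_cast h2, by exact_mod_cast h3⟩⟩
    · rintro ⟨h1, h2⟩
      obtain ⟨h2a, h2b⟩ := Finset.mem_Icc.mp h2
      exact ⟨h1, by exact_mod_cast h2a, by exact_mod_cast h2b⟩
  -- the finset of lattice points of n • Q₁
  set AF : Finset (Fin (s+1) → ℤ) :=
    SF.biUnion (fun a => (Finset.Icc (0:ℤ) (Na a)).image
      (fun t => (Fin.snoc a t : Fin (s+1) → ℤ))) with hAFdef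
  have hA : {a : Fin (s + 1) → ℤ | (fun j => (a j : ℝ)) ∈ (n : ℝ) • Q₁} = ↑AF := by
    ext c
    simp only [Set.mem_setOf_eq, hkey c, Finset.mem_coe, hAFdef, Finset.mem_biUnion,
      Finset.mem_image]
    constructor
    · rintro ⟨h1, h2⟩
      refine ⟨Fin.init c, ?_, c (Fin.last s), h2, Fin.snoc_init_self c⟩
      rwa [hSFdef, Set.Finite.mem_toFinset]
    · rintro ⟨a, ha, t, ht, rfl⟩
      rw [Fin.init_snoc, Fin.snoc_last]
      exact ⟨by rwa [hSFdef, Set.Finite.mem_toFinset] at ha, ht⟩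
  -- counting
  have hsnoc_inj : ∀ a : Fin s → ℤ, Function.Injective
      (fun t => (Fin.snoc a t : Fin (s+1) → ℤ)) := by
    intro a t t' h
    have := congrFun h (Fin.last s)
    simpa using this
  have hAFcard : AF.card = ∑ a ∈ SF, (Na a + 1).toNat := by
    rw [hAFdef, Finset.card_biUnion]
    · refine Finset.sum_congr rfl fun a _ => ?_
      rw [Finset.card_image_of_injective _ (hsnoc_inj a), Int.card_Icc]
      norm_num
    · intro a ha a' ha' haa'
      simp only [Finset.disjoint_left, Finset.mem_image]
      rintro c ⟨t, ht, rfl⟩ ⟨t', ht', hc⟩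
      apply haa'
      have h2 : a' = a := by
        funext j
        have := congrFun hc (Fin.castSucc j)
        simpa using this
      rw [h2]
  -- putting it all together
  rw [hA]
  rw [hScoe]
  rw [Set.ncard_coe_finset, Set.ncard_coe_finset, finsum_mem_coe_finset, hAFcard]
  have hcast : ((∑ a ∈ SF, (Na a + 1).toNat : ℕ) : ℝ) = ∑ a ∈ SF, ((Na a : ℝ) + 1) := by
    push_cast
    refine Finset.sum_congr rfl fun a ha => ?_
    have hnn : 0 ≤ Na a + 1 := by
      have := hNann a (by rw [hScoe, Finset.mem_coe]; exact ha)
      omega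
    rw [show (((Na a + 1).toNat : ℕ) : ℝ) = (((Na a + 1).toNat : ℤ) : ℝ) by push_cast; ring,
      Int.toNat_of_nonneg hnn]
    push_cast
    ring
  rw [hcast]
  have hCval : ∀ a ∈ SF, C (fun j => (a j : ℝ)) + b = ((Na a : ℝ) + 1) + (b - 1) := by
    intro a ha
    rw [← hNaC a]; ring
  rw [Finset.sum_congr rfl hCval, Finset.sum_add_distrib, Finset.sum_const,
    nsmul_eq_mul]
  ring
end
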